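/- arXiv:2204.09365 — 2 statements merged into one kernel-verified Lean document; each statement's English description precedes it below -/
import Mathlib

section
/- Two matrices with a different number of columns, each of whose rows is a string from a strong non-overlapping set of strings, are strong non-overlapping matrices. -/
/-- The four sides (borders) of a matrix: top, bottom, left, right. -/
inductive Side | top | bottom | left | right
  deriving DecidableEq

/-- A matrix over an alphabet `α`, with `rows × cols` relevant entries. -/
structure Mat (α : Type*) where
  rows : ℕ
  cols : ℕ
  entry : ℕ → ℕ → α

namespace Mat

/-- The `i`-th row of a matrix, as a string (list) of length `cols`. -/
def row {α : Type*} (A : Mat α) (i : ℕ) : List α :=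
  (List.range A.cols).map (fun j => A.entry i j)

/-- Two matrices have the same content (same dimensions and same in-range entries). -/
def Same {α : Type*} (A B : Mat α) : Prop :=
  A.rows = B.rows ∧ A.cols = B.cols ∧
    ∀ i j, i < A.rows → j < A.cols → A.entry i j = B.entry i j

end Mat

/-- A cut sequence partitioning `[0, m)` into `h` nonempty consecutive intervals. -/
def IsCuts (m h : ℕ) (r : Fin (h+1) → ℕ) : Prop :=
  r 0 = 0 ∧ r (Fin.last h) = m ∧ StrictMono r

/-- The frame of block `(i,j)` in a block partition with `h` block-rows and
`k` block-columns: which borders of the full matrix the block touches. -/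
def frame (i h j k : ℕ) : Set Side :=
  {s | (s = Side.top ∧ i = 0) ∨ (s = Side.bottom ∧ i = h - 1) ∨
       (s = Side.left ∧ j = 0) ∨ (s = Side.right ∧ j = k - 1)}

/-- A witness that matrices `A` and `B` overlap via block partitions of `A`
(with `h × k` blocks) and of `B` (with `h' × k'` blocks): a common block
`A_{ij} = B_{i'j'}` whose frames jointly cover `{t,b,l,r}`. -/
structure OverlapWitness {α : Type*} (A B : Mat α) (h k h' k' : ℕ) : Type where
  r : Fin (h+1) → ℕ
  c : Fin (k+1) → ℕ
  r' : Fin (h'+1) → ℕ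
  c' : Fin (k'+1) → ℕ
  cutsR : IsCuts A.rows h r
  cutsC : IsCuts A.cols k c
  cutsR' : IsCuts B.rows h' r'
  cutsC' : IsCuts B.cols k' c'
  i : Fin h
  j : Fin k
  i' : Fin h'
  j' : Fin k'
  sameHeight : r i.succ - r i.castSucc = r' i'.succ - r' i'.castSucc
  sameWidth : c j.succ - c j.castSucc = c' j'.succ - c' j'.castSucc
  blockEq : ∀ x y, x < r i.succ - r i.castSucc → y < c j.succ - c j.castSucc →
      A.entry (r i.castSucc + x) (c j.castSucc + y)
        = B.entry (r' i'.castSucc + x) (c' j'.castSucc + y)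
  frames : frame i.val h j.val k ∪ frame i'.val h' j'.val k' = Set.univ

/-- `A` and `B` are overlapping matrices. -/
def Overlap {α : Type*} (A B : Mat α) : Prop :=
  ∃ h k h' k', Nonempty (OverlapWitness A B h k h' k')

/-- `A` and `B` are strong non-overlapping matrices. -/
def StrongNonOverlappingMat {α : Type*} (A B : Mat α) : Prop := ¬ Overlap A B

/-- `A` is self non-overlapping: the only overlap of `A` with itself is the
trivial one where the common block is `A` itself. -/
def SelfNonOverlapping {α : Type*} (A : Mat α) : Prop :=
  ∀ h k h' k' (w : OverlapWitness A A h k h' k'),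
    w.r w.i.succ - w.r w.i.castSucc = A.rows ∧
    w.c w.j.succ - w.c w.j.castSucc = A.cols

/-- `Borders v w`: some nonempty proper prefix of `v` equals a proper suffix of `w`. -/
def Borders {α : Type*} (v w : List α) : Prop :=
  ∃ p : List α, p ≠ [] ∧ p <+: v ∧ p ≠ v ∧ p <:+ w ∧ p ≠ w

/-- A string is unbordered (self non-overlapping / bifix-free). -/
def Unbordered {α : Type*} (v : List α) : Prop := ¬ Borders v v

/-- Two strings are non-overlapping (cross bifix-free): no nonempty proper
prefix of one equals a proper suffix of the other. -/
def NonOverlappingStr {α : Type*} (v w : List α) : Prop :=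
  ¬ Borders v w ∧ ¬ Borders w v

/-- `v` occurs as an inner factor of `w`: `w = a ++ v ++ b` with `a, b` not both empty. -/
def InnerFactor {α : Type*} (v w : List α) : Prop :=
  ∃ a b : List α, (a ≠ [] ∨ b ≠ []) ∧ w = a ++ v ++ b

/-- Two strings are strong non-overlapping. -/
def StrongNonOverlappingStr {α : Type*} (v w : List α) : Prop :=
  NonOverlappingStr v w ∧ ¬ InnerFactor v w ∧ ¬ InnerFactor w v

/-- A strong non-overlapping set of strings. -/
def SNOSet {α : Type*} (W : Set (List α)) : Prop :=
  ∀ v ∈ W, ∀ w ∈ W, StrongNonOverlappingStr v w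

private lemma seg_eq {α : Type*} (f : ℕ → α) (m s L : ℕ) (h : s + L ≤ m) :
    (((List.range m).map f).drop s).take L = (List.range L).map (fun y => f (s+y)) := by
  apply List.ext_getElem
  · simp; omega
  · intro n h1 h2
    simp [List.getElem_take, List.getElem_drop]

private lemma cuts_facts (m h : ℕ) (r : Fin (h+1) → ℕ) (hc : IsCuts m h r) (i : Fin h) :
    r i.castSucc < r i.succ ∧ r i.succ ≤ m := by
  constructor
  · exact hc.2.2 (by simp [Fin.lt_def])
  · rw [← hc.2.1]; exact hc.2.2.monotone (Fin.le_last _)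

/-- Two matrices with a different number of columns, each of whose rows is a
string from a strong non-overlapping set, are strong non-overlapping matrices. -/
theorem stmt2 {α : Type*} (W : Set (List α)) (hW : SNOSet W) (C D : Mat α)
    (hC : ∀ i, i < C.rows → C.row i ∈ W) (hD : ∀ i, i < D.rows → D.row i ∈ W)
    (hcols : C.cols ≠ D.cols) :
    StrongNonOverlappingMat C D := by
  intro hov
  obtain ⟨h, k, h', k', ⟨ow⟩⟩ := hov
  -- row indices
  set i0 := ow.r ow.i.castSucc with hi0
  set i0' := ow.r' ow.i'.castSucc with hi0'
  obtain ⟨hiR1, hiR2⟩ := cuts_facts _ _ _ ow.cutsR ow.i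
  obtain ⟨hiR1', hiR2'⟩ := cuts_facts _ _ _ ow.cutsR' ow.i'
  have hi0lt : i0 < C.rows := lt_of_lt_of_le hiR1 hiR2
  have hi0lt' : i0' < D.rows := lt_of_lt_of_le hiR1' hiR2'
  -- column data
  set sC := ow.c ow.j.castSucc with hsC
  set eC := ow.c ow.j.succ with heC
  set sD := ow.c' ow.j'.castSucc with hsD
  set eD := ow.c' ow.j'.succ with heD
  obtain ⟨hjC1, hjC2⟩ := cuts_facts _ _ _ ow.cutsC ow.j
  obtain ⟨hjD1, hjD2⟩ := cuts_facts _ _ _ ow.cutsC' ow.j'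
  set L := eC - sC with hL
  have hLD : L = eD - sD := ow.sameWidth
  have hLpos : 0 < L := by omega
  -- the rows as strings
  set v := C.row i0 with hv
  set w := D.row i0' with hw
  have hvW : v ∈ W := hC i0 hi0lt
  have hwW : w ∈ W := hD i0' hi0lt'
  have hS := hW v hvW w hwW
  have hvlen : v.length = C.cols := by simp [hv, Mat.row]
  have hwlen : w.length = D.cols := by simp [hw, Mat.row]
  -- the common block's first row
  set p := (List.range L).map (fun y => C.entry i0 (sC + y)) with hp
  have hplen : p.length = L := by simp [hp]
  have hpne : p ≠ [] := by
    intro hcon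
    rw [hcon] at hplen
    simp at hplen
    omega
  have hpC : (v.drop sC).take L = p := by
    rw [hv, Mat.row, seg_eq _ _ _ _ (by omega)]
  have hpD : (w.drop sD).take L = p := by
    rw [hw, Mat.row, seg_eq _ _ _ _ (by omega), hp]
    apply List.map_congr_left
    intro y hy
    simp at hy
    have := ow.blockEq 0 y (by omega) (by omega)
    simpa using this.symm
  have hvdec : v = v.take sC ++ p ++ v.drop (sC + L) := by
    rw [← hpC, List.append_assoc, ← List.drop_drop, List.take_append_drop,
      List.take_append_drop]
  have hwdec : w = w.take sD ++ p ++ w.drop (sD + L) := by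
    rw [← hpD, List.append_assoc, ← List.drop_drop, List.take_append_drop,
      List.take_append_drop]
  -- frame conditions
  have hframes := ow.frames
  have hleft : Side.left ∈ frame ow.i.val h ow.j.val k ∪ frame ow.i'.val h' ow.j'.val k' := by
    rw [hframes]; trivial
  have hright : Side.right ∈ frame ow.i.val h ow.j.val k ∪ frame ow.i'.val h' ow.j'.val k' := by
    rw [hframes]; trivial
  simp only [frame, Set.mem_union, Set.mem_setOf_eq] at hleft hright
  have hleft' : sC = 0 ∨ sD = 0 := by
    rcases hleft with (h1 | h1) <;>
    · rcases h1 with (⟨h2,_⟩|⟨h2,_⟩|⟨h2,h3⟩|⟨h2,_⟩) <;> try (exact absurd h2 (by decide))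
      first
      | left
        have : (ow.j.castSucc : Fin (k+1)) = 0 := by ext; simp [h3]
        rw [hsC, this]; exact ow.cutsC.1
      | right
        have : (ow.j'.castSucc : Fin (k'+1)) = 0 := by ext; simp [h3]
        rw [hsD, this]; exact ow.cutsC'.1
  have hright' : eC = C.cols ∨ eD = D.cols := by
    rcases hright with (h1 | h1) <;>
    · rcases h1 with (⟨h2,_⟩|⟨h2,_⟩|⟨h2,_⟩|⟨h2,h3⟩) <;> try (exact absurd h2 (by decide))
      first
      | left
        have : (ow.j.succ : Fin (k+1)) = Fin.last k := by
          ext; simp [h3]; omega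
        rw [heC, this]; exact ow.cutsC.2.1
      | right
        have : (ow.j'.succ : Fin (k'+1)) = Fin.last k' := by
          ext; simp [h3]; omega
        rw [heD, this]; exact ow.cutsC'.2.1
  -- case analysis
  rcases hleft' with hsC0 | hsD0 <;> rcases hright' with heCm | heDm
  · -- sC = 0, eC = C.cols : p = v, and v is a factor of w
    have hpv : p = v := by
      have h1 : v.take sC = [] := by rw [hsC0]; simp
      have h2 : v.drop (sC + L) = [] := by
        apply List.drop_eq_nil_of_le; omega
      rw [hvdec, h1, h2]; simp
    have : InnerFactor v w := by
      refine ⟨w.take sD, w.drop (sD + L), ?_, by rw [← hpv, ← hwdec]⟩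
      by_contra hcon
      push_neg at hcon
      have h1 := hcon.1
      have h2 := hcon.2
      have : w = p := by rw [hwdec, h1, h2]; simp
      apply hcols
      rw [← hvlen, ← hwlen, this, hpv]
    exact hS.2.1 this
  · -- sC = 0, eD = D.cols : p prefix of v, suffix of w
    have h1 : v.take sC = [] := by rw [hsC0]; simp
    have h2 : w.drop (sD + L) = [] := by apply List.drop_eq_nil_of_le; omega
    have hvp : v = p ++ v.drop (sC + L) := by (conv_lhs => rw [hvdec, h1]); simp
    have hwp : w = w.take sD ++ p := by (conv_lhs => rw [hwdec, h2]); simp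
    by_cases hpev : p = v
    · by_cases hpew : p = w
      · exact hcols (by rw [← hvlen, ← hwlen, ← hpev, ← hpew])
      · refine hS.2.1 ⟨w.take sD, [], Or.inl ?_, by rw [← hpev]; simpa using hwp⟩
        intro hcon
        exact hpew (by rw [hwp, hcon]; simp)
    · by_cases hpew : p = w
      · refine hS.2.2 ⟨[], v.drop (sC + L), Or.inr ?_, by rw [← hpew]; simpa using hvp⟩
        intro hcon
        exact hpev (by rw [hvp, hcon]; simp)
      · exact hS.1.1 ⟨p, hpne, ⟨v.drop (sC + L), hvp.symm⟩, hpev,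
          ⟨w.take sD, hwp.symm⟩, hpew⟩
  · -- sD = 0, eC = C.cols : p suffix of v, prefix of w
    have h1 : w.take sD = [] := by rw [hsD0]; simp
    have h2 : v.drop (sC + L) = [] := by apply List.drop_eq_nil_of_le; omega
    have hwp : w = p ++ w.drop (sD + L) := by (conv_lhs => rw [hwdec, h1]); simp
    have hvp : v = v.take sC ++ p := by (conv_lhs => rw [hvdec, h2]); simp
    by_cases hpev : p = v
    · by_cases hpew : p = w
      · exact hcols (by rw [← hvlen, ← hwlen, ← hpev, ← hpew])
      · refine hS.2.1 ⟨[], w.drop (sD + L), Or.inr ?_, by rw [← hpev]; simpa using hwp⟩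
        intro hcon
        exact hpew (by rw [hwp, hcon]; simp)
    · by_cases hpew : p = w
      · refine hS.2.2 ⟨v.take sC, [], Or.inl ?_, by rw [← hpew]; simpa using hvp⟩
        intro hcon
        exact hpev (by rw [hvp, hcon]; simp)
      · exact hS.1.2 ⟨p, hpne, ⟨w.drop (sD + L), hwp.symm⟩, hpew,
          ⟨v.take sC, hvp.symm⟩, hpev⟩
  · -- sD = 0, eD = D.cols : p = w, and w is a factor of v
    have hpw : p = w := by
      have h1 : w.take sD = [] := by rw [hsD0]; simp
      have h2 : w.drop (sD + L) = [] := by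
        apply List.drop_eq_nil_of_le; omega
      rw [hwdec, h1, h2]; simp
    have : InnerFactor w v := by
      refine ⟨v.take sC, v.drop (sC + L), ?_, by rw [← hpw, ← hvdec]⟩
      by_contra hcon
      push_neg at hcon
      have h1 := hcon.1
      have h2 := hcon.2
      have : v = p := by rw [hvdec, h1, h2]; simp
      apply hcols
      rw [← hvlen, ← hwlen, this, hpw]
    exact hS.2.2 this
end

section
/- Let V_n = ∪_{s0 ≤ s ≤ n} V^s be a strong non-overlapping set of strings over alphabet Σ, where V^s consists of the strings of length s and s0 ≥ 2. For each s fix distinct T^s, B^s ∈ V^s, and let 𝒱 be the set of all matrices with 2 ≤ h ≤ m rows and s columns (s0 ≤ s ≤ n) whose first row is T^s, last row is B^s, and whose inner rows lie in V^s \ {T^s, B^s}. Then 𝒱 is a strong non-overlapping set of matrices: every matrix in 𝒱 is self non-overlapping, and any two matrices in 𝒱 are strong non-overlapping. -/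
/-!
The first row of a common block is a factor of one row of each matrix, and the left/right frame
conditions make it a prefix of one of these rows and a suffix of the other (or one of the rows
itself). Since all rows come from a strong non-overlapping set, the block spans the full width, so
it consists of whole rows. Now read a matrix of width `s` as the word of its rows: it begins with
`T s`, ends with `Bt s`, and contains these letters nowhere else, and such words again form a strong
non-overlapping set. The same argument applied to these words of rows shows that the block is all
of both matrices.
-/

section Strings

variable {β : Type*} {p v w a b : List β}

theorem StrongNonOverlappingStr.symm (h : StrongNonOverlappingStr v w) :
    StrongNonOverlappingStr w v :=
  ⟨h.1.symm, h.2.2, h.2.1⟩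

theorem eq_nil_of_not_innerFactor (h : ¬ InnerFactor v w) (hw : w = a ++ v ++ b) :
    a = [] ∧ b = [] := by
  by_contra hab
  exact h ⟨a, b, not_and_or.mp hab, hw⟩

theorem eq_nil_or_eq_nil_of_not_borders (h : ¬ Borders v w) (hp : p ≠ [])
    (hv : v = p ++ b) (hw : w = a ++ p) : b = [] ∨ a = [] := by
  by_contra! hab
  refine h ⟨p, hp, ⟨b, hv.symm⟩, ?_, ⟨a, hw.symm⟩, ?_⟩
  · rintro rfl
    exact hab.1 (List.self_eq_append_right.mp hv)
  · rintro rfl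
    exact hab.2 (List.self_eq_append_left.mp hw)

theorem StrongNonOverlappingStr.eq_nil_of_prefix_of_factor {b' : List β}
    (hvw : StrongNonOverlappingStr v w) (hp : p ≠ []) (hv : v = p ++ b)
    (hw : w = a ++ p ++ b') (hb : b = [] ∨ b' = []) : b = [] ∧ a = [] ∧ b' = [] := by
  have of_whole : b = [] → a = [] ∧ b' = [] := fun hb => by
    subst hb
    exact eq_nil_of_not_innerFactor hvw.2.1 (by simpa [hv] using hw)
  rcases hb with hb | hb'
  · exact ⟨hb, of_whole hb⟩
  rcases eq_nil_or_eq_nil_of_not_borders hvw.1.1 hp hv (by simpa [hb'] using hw) with hb | ha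
  · exact ⟨hb, of_whole hb⟩
  · have hv' : v = [] ++ w ++ b := by simp [hv, hw, ha, hb']
    exact ⟨(eq_nil_of_not_innerFactor hvw.2.2 hv').2, ha, hb'⟩

theorem StrongNonOverlappingStr.eq_nil_of_common_factor {a' b' : List β}
    (hvw : StrongNonOverlappingStr v w) (hp : p ≠ []) (hv : v = a ++ p ++ b)
    (hw : w = a' ++ p ++ b') (ha : a = [] ∨ a' = []) (hb : b = [] ∨ b' = []) :
    a = [] ∧ b = [] ∧ a' = [] ∧ b' = [] := by
  rcases ha with rfl | rfl
  · exact ⟨rfl, hvw.eq_nil_of_prefix_of_factor hp (by simpa using hv) hw hb⟩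
  · obtain ⟨hb', ha, hb⟩ := hvw.symm.eq_nil_of_prefix_of_factor hp (by simpa using hw) hv hb.symm
    exact ⟨ha, hb, rfl, hb'⟩

end Strings

section FramedWords

variable {β : Type*} {t b : β} {u v : List β}

def framedWords (t b : β) : Set (List β) :=
  {u | ∃ x, t ∉ x ∧ b ∉ x ∧ u = t :: x ++ [b]}

theorem not_mem_tail_of_mem_framedWords (htb : t ≠ b) (hu : u ∈ framedWords t b) :
    t ∉ u.tail := by
  obtain ⟨x, htx, -, rfl⟩ := hu
  simp [htx, htb]

theorem not_mem_dropLast_of_mem_framedWords (htb : t ≠ b) (hu : u ∈ framedWords t b) :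
    b ∉ u.dropLast := by
  obtain ⟨x, -, hbx, rfl⟩ := hu
  rw [List.dropLast_concat]
  simp [hbx, htb.symm]

theorem not_borders_of_mem_framedWords (htb : t ≠ b) (hu : u ∈ framedWords t b)
    (hv : v ∈ framedWords t b) : ¬ Borders u v := by
  rintro ⟨_ | ⟨q, p⟩, hp, hpu, -, hpv, hpv'⟩
  · exact hp rfl
  have hq : q = t := by
    obtain ⟨x, -, -, rfl⟩ := hu
    exact (List.cons_prefix_cons.mp (by simpa using hpu)).1
  have hsuf : q :: p <:+ v.tail := by
    obtain ⟨y, -, -, rfl⟩ := hv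
    exact (List.suffix_cons_iff.mp (by simpa using hpv)).resolve_left (by simpa using hpv')
  exact not_mem_tail_of_mem_framedWords htb hv (hq ▸ hsuf.subset List.mem_cons_self)

theorem not_innerFactor_of_mem_framedWords (htb : t ≠ b) (hu : u ∈ framedWords t b)
    (hv : v ∈ framedWords t b) : ¬ InnerFactor u v := by
  rintro ⟨a, c, ha | hc, rfl⟩
  · apply not_mem_tail_of_mem_framedWords htb hv
    rw [List.append_assoc, List.tail_append_of_ne_nil ha]
    obtain ⟨x, -, -, rfl⟩ := hu
    simp
  · apply not_mem_dropLast_of_mem_framedWords htb hv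
    rw [List.dropLast_append_of_ne_nil hc]
    obtain ⟨x, -, -, rfl⟩ := hu
    simp

theorem snoSet_framedWords (htb : t ≠ b) : SNOSet (framedWords t b) := fun _ hu _ hv =>
  ⟨⟨not_borders_of_mem_framedWords htb hu hv, not_borders_of_mem_framedWords htb hv hu⟩,
    not_innerFactor_of_mem_framedWords htb hu hv, not_innerFactor_of_mem_framedWords htb hv hu⟩

end FramedWords

section Segments

variable {β : Type*}

def seg (f : ℕ → β) (a w : ℕ) : List β := (List.range w).map (fun y => f (a + y))

@[simp]
theorem seg_eq_nil {f : ℕ → β} {a w : ℕ} : seg f a w = [] ↔ w = 0 := by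
  simp [seg]

theorem mem_seg {f : ℕ → β} {a w : ℕ} {z : β} : z ∈ seg f a w ↔ ∃ y < w, f (a + y) = z := by
  simp [seg]

theorem seg_one (f : ℕ → β) (a : ℕ) : seg f a 1 = [f a] := by
  simp [seg]

theorem seg_append (f : ℕ → β) (a w w' : ℕ) : seg f a w ++ seg f (a + w) w' = seg f a (w + w') := by
  simp [seg, List.range_add, Nat.add_assoc]

theorem seg_zero_eq_append (f : ℕ → β) {a w N : ℕ} (h : a + w ≤ N) :
    seg f 0 N = seg f 0 a ++ seg f a w ++ seg f (a + w) (N - (a + w)) := by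
  have h₁ := seg_append f 0 a w
  have h₂ := seg_append f 0 (a + w) (N - (a + w))
  rw [Nat.zero_add] at h₁ h₂
  rw [h₁, h₂, Nat.add_sub_cancel' h]

theorem Mat.row_eq_seg {α : Type*} (A : Mat α) (i : ℕ) : A.row i = seg (A.entry i) 0 A.cols := by
  simp [Mat.row, seg]

theorem SNOSet.seg_eq_whole {W : Set (List β)} (hW : SNOSet W) {f g : ℕ → β} {N N' a a' w : ℕ}
    (hf : seg f 0 N ∈ W) (hg : seg g 0 N' ∈ W) (hw : 0 < w) (ha : a + w ≤ N)
    (ha' : a' + w ≤ N') (hfg : seg f a w = seg g a' w) (hleft : a = 0 ∨ a' = 0)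
    (hright : a + w = N ∨ a' + w = N') : a = 0 ∧ a' = 0 ∧ w = N ∧ w = N' := by
  have hg' := seg_zero_eq_append g ha'
  rw [← hfg] at hg'
  have := (hW _ hf _ hg).eq_nil_of_common_factor (by simpa using hw.ne')
    (seg_zero_eq_append f ha) hg' (by simpa using hleft)
    (hright.imp (fun h => by simp [h]) (fun h => by simp [h]))
  simp only [seg_eq_nil] at this
  omega

theorem seg_mem_framedWords {f : ℕ → β} {N : ℕ} {t b : β} (hN : 2 ≤ N) (h0 : f 0 = t)
    (hlast : f (N - 1) = b) (hinner : ∀ i, 0 < i → i < N - 1 → f i ≠ t ∧ f i ≠ b) :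
    seg f 0 N ∈ framedWords t b := by
  refine ⟨seg f 1 (N - 2), fun ht => ?_, fun hb => ?_, ?_⟩
  · obtain ⟨y, hy, hfy⟩ := mem_seg.mp ht
    exact (hinner (1 + y) (by omega) (by omega)).1 hfy
  · obtain ⟨y, hy, hfy⟩ := mem_seg.mp hb
    exact (hinner (1 + y) (by omega) (by omega)).2 hfy
  · have := seg_zero_eq_append f (a := 1) (w := N - 2) (N := N) (by omega)
    rw [this, show 1 + (N - 2) = N - 1 by omega, show N - (N - 1) = 1 by omega, seg_one, seg_one,
      h0, hlast]
    rfl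

end Segments

namespace IsCuts

variable {m h : ℕ} {r : Fin (h + 1) → ℕ}

theorem castSucc_lt_succ (hc : IsCuts m h r) (i : Fin h) : r i.castSucc < r i.succ :=
  hc.2.2 i.castSucc_lt_succ

theorem succ_le (hc : IsCuts m h r) (i : Fin h) : r i.succ ≤ m :=
  hc.2.1 ▸ hc.2.2.monotone (Fin.le_last _)

theorem castSucc_eq_zero (hc : IsCuts m h r) {i : Fin h} (hi : i.val = 0) : r i.castSucc = 0 := by
  rw [show i.castSucc = 0 from Fin.ext hi, hc.1]

theorem succ_eq (hc : IsCuts m h r) {i : Fin h} (hi : i.val = h - 1) : r i.succ = m := by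
  rw [show i.succ = Fin.last h from Fin.ext (by simp [hi]; omega), hc.2.1]

end IsCuts

theorem index_eq_of_frame_union_eq_univ {i h j k i' h' j' k' : ℕ}
    (hf : frame i h j k ∪ frame i' h' j' k' = Set.univ) :
    (i = 0 ∨ i' = 0) ∧ (i = h - 1 ∨ i' = h' - 1) ∧ (j = 0 ∨ j' = 0) ∧ (j = k - 1 ∨ j' = k' - 1) := by
  have hs := Set.eq_univ_iff_forall.mp hf
  refine ⟨?_, ?_, ?_, ?_⟩
  · simpa [frame] using hs Side.top
  · simpa [frame] using hs Side.bottom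
  · simpa [frame] using hs Side.left
  · simpa [frame] using hs Side.right

theorem OverlapWitness.eq_whole {α : Type*} {A B : Mat α} {h k h' k' : ℕ} {W : Set (List α)}
    (hW : SNOSet W) {top bot : ℕ → List α}
    (hAW : ∀ i < A.rows, A.row i ∈ W) (hBW : ∀ i < B.rows, B.row i ∈ W)
    (hA : seg A.row 0 A.rows ∈ framedWords (top A.cols) (bot A.cols))
    (hB : seg B.row 0 B.rows ∈ framedWords (top B.cols) (bot B.cols))
    (htb : top A.cols ≠ bot A.cols) (w : OverlapWitness A B h k h' k') :
    w.r w.i.succ - w.r w.i.castSucc = A.rows ∧ w.c w.j.succ - w.c w.j.castSucc = A.cols ∧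
      A.Same B := by
  obtain ⟨r, c, r', c', hr, hc, hr', hc', i, j, i', j', hheight, hwidth, hblock, hframes⟩ := w
  obtain ⟨htop, hbot, hleft, hright⟩ := index_eq_of_frame_union_eq_univ hframes
  have := hr.castSucc_lt_succ i; have := hr.succ_le i
  have := hr'.castSucc_lt_succ i'; have := hr'.succ_le i'
  have := hc.castSucc_lt_succ j; have := hc.succ_le j
  have := hc'.castSucc_lt_succ j'; have := hc'.succ_le j'
  obtain ⟨hj, hj', hwA, hwB⟩ : c j.castSucc = 0 ∧ c' j'.castSucc = 0 ∧
      c j.succ - c j.castSucc = A.cols ∧ c j.succ - c j.castSucc = B.cols := by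
    refine hW.seg_eq_whole (f := A.entry (r i.castSucc)) (g := B.entry (r' i'.castSucc))
      (by rw [← Mat.row_eq_seg]; exact hAW _ (by omega))
      (by rw [← Mat.row_eq_seg]; exact hBW _ (by omega)) (by omega) (by omega) (by omega) ?_ ?_ ?_
    · refine List.map_congr_left fun y hy => ?_
      simpa using hblock 0 y (by omega) (by simpa using hy)
    · exact hleft.imp hc.castSucc_eq_zero hc'.castSucc_eq_zero
    · refine hright.imp (fun hj => ?_) (fun hj => ?_)
      · have := hc.succ_eq hj; omega
      · have := hc'.succ_eq hj; omega
  have hrow : ∀ x < r i.succ - r i.castSucc,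
      A.row (r i.castSucc + x) = B.row (r' i'.castSucc + x) := fun x hx => by
    simp only [Mat.row, ← hwB, ← hwA]
    refine List.map_congr_left fun y hy => ?_
    simpa [hj, hj'] using hblock x y hx (by simpa [hwA] using hy)
  obtain ⟨hi, hi', htA, htB⟩ : r i.castSucc = 0 ∧ r' i'.castSucc = 0 ∧
      r i.succ - r i.castSucc = A.rows ∧ r i.succ - r i.castSucc = B.rows := by
    refine (snoSet_framedWords htb).seg_eq_whole hA (by rwa [← hwA, hwB]) (by omega) (by omega)
      (by omega) (List.map_congr_left fun x hx => hrow x (by simpa using hx)) ?_ ?_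
    · exact htop.imp hr.castSucc_eq_zero hr'.castSucc_eq_zero
    · refine hbot.imp (fun hi => ?_) (fun hi => ?_)
      · have := hr.succ_eq hi; omega
      · have := hr'.succ_eq hi; omega
  refine ⟨htA, hwA, by omega, by omega, fun x y hx hy => ?_⟩
  simpa [hi, hi', hj, hj'] using hblock x y (by omega) (by omega)

theorem stmt3_general {α : Type*} (s0 n m : ℕ)
    (V : ℕ → Set (List α))
    (hSNO : SNOSet {v | ∃ s, s0 ≤ s ∧ s ≤ n ∧ v ∈ V s})
    (T Bt : ℕ → List α)
    (hT : ∀ s, s0 ≤ s → s ≤ n → T s ∈ V s)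
    (hBt : ∀ s, s0 ≤ s → s ≤ n → Bt s ∈ V s)
    (hTB : ∀ s, s0 ≤ s → s ≤ n → T s ≠ Bt s)
    (𝒱 : Set (Mat α))
    (h𝒱 : ∀ M : Mat α, M ∈ 𝒱 ↔ ∃ h s, 2 ≤ h ∧ h ≤ m ∧ s0 ≤ s ∧ s ≤ n ∧
      M.rows = h ∧ M.cols = s ∧ M.row 0 = T s ∧ M.row (h - 1) = Bt s ∧
      ∀ i, 0 < i → i < h - 1 → M.row i ∈ V s ∧ M.row i ≠ T s ∧ M.row i ≠ Bt s) :
    (∀ A ∈ 𝒱, SelfNonOverlapping A) ∧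
    (∀ A ∈ 𝒱, ∀ B ∈ 𝒱, ¬ A.Same B → StrongNonOverlappingMat A B) := by
  have spec : ∀ A ∈ 𝒱, (∀ i < A.rows, A.row i ∈ {v | ∃ s, s0 ≤ s ∧ s ≤ n ∧ v ∈ V s}) ∧
      seg A.row 0 A.rows ∈ framedWords (T A.cols) (Bt A.cols) ∧ T A.cols ≠ Bt A.cols := by
    intro A hA
    obtain ⟨_, _, h2, -, hs0, hsn, rfl, rfl, htop, hbot, hinner⟩ := (h𝒱 A).1 hA
    refine ⟨fun i hi => ⟨A.cols, hs0, hsn, ?_⟩,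
      seg_mem_framedWords h2 htop hbot fun i h0 hi => (hinner i h0 hi).2, hTB _ hs0 hsn⟩
    rcases Nat.eq_zero_or_pos i with rfl | h0
    · exact htop ▸ hT _ hs0 hsn
    rcases (Nat.le_sub_one_of_lt hi).eq_or_lt with rfl | hlt
    · exact hbot ▸ hBt _ hs0 hsn
    · exact (hinner i h0 hlt).1
  refine ⟨fun A hA _ _ _ _ w => ?_, fun A hA B hB hAB ⟨_, _, _, _, ⟨w⟩⟩ => ?_⟩
  · obtain ⟨hAW, hA, htb⟩ := spec A hA
    exact (w.eq_whole hSNO hAW hAW hA hA htb).imp_right And.left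
  · obtain ⟨hAW, hA, htb⟩ := spec A hA
    obtain ⟨hBW, hB, -⟩ := spec B hB
    exact hAB (w.eq_whole hSNO hAW hBW hA hB htb).2.2

/-- The construction of the paper: matrices with `2 ≤ h ≤ m` rows and
`s0 ≤ s ≤ n` columns, rows from `V s`, fixed distinct top row `T s` and bottom
row `Bt s`, inner rows avoiding them, form a strong non-overlapping set of
matrices: each matrix is self non-overlapping, and any two (distinct) matrices
are strong non-overlapping. -/
theorem stmt3 {α : Type*} (s0 n m : ℕ) (hs0 : 2 ≤ s0)
    (V : ℕ → Set (List α)) (hlen : ∀ s, ∀ v ∈ V s, v.length = s)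
    (hSNO : SNOSet {v | ∃ s, s0 ≤ s ∧ s ≤ n ∧ v ∈ V s})
    (T Bt : ℕ → List α)
    (hT : ∀ s, s0 ≤ s → s ≤ n → T s ∈ V s)
    (hBt : ∀ s, s0 ≤ s → s ≤ n → Bt s ∈ V s)
    (hTB : ∀ s, s0 ≤ s → s ≤ n → T s ≠ Bt s)
    (𝒱 : Set (Mat α))
    (h𝒱 : ∀ M : Mat α, M ∈ 𝒱 ↔ ∃ h s, 2 ≤ h ∧ h ≤ m ∧ s0 ≤ s ∧ s ≤ n ∧
      M.rows = h ∧ M.cols = s ∧ M.row 0 = T s ∧ M.row (h - 1) = Bt s ∧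
      ∀ i, 0 < i → i < h - 1 → M.row i ∈ V s ∧ M.row i ≠ T s ∧ M.row i ≠ Bt s) :
    (∀ A ∈ 𝒱, SelfNonOverlapping A) ∧
    (∀ A ∈ 𝒱, ∀ B ∈ 𝒱, ¬ A.Same B → StrongNonOverlappingMat A B) :=
  stmt3_general s0 n m V hSNO T Bt hT hBt hTB 𝒱 h𝒱
end
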